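/- Define on the punctured unit disk B₁ \ {0} ⊂ ℝ² the matrix a₁₁ = (M x₁² + x₂²)/|x|², a₂₂ = (x₁² + M x₂²)/|x|², a₁₂ = a₂₁ = (M−1) x₁ x₂ / |x|² with constant M > 1. Then the function u(x) = |x|^{1/√M} · x₁/|x| satisfies ∑_{i,j=1}² ∂_{x_i}(a_{ij} ∂_{x_j} u) = 0 pointwise on B₁ \ {0}. -/

import Mathlib

/-!
Away from the origin write `s = x₁² + x₂²` and `c = (1/√M − 1)/2`, so that `u = s^c x₁` is
homogeneous of degree `α = 2c + 1 = 1/√M`. Since `a = I + (M − 1) x xᵀ / s` and `x · ∇u = α u`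
(Euler), the flux is `a ∇u = s^(c−1) (s e₁ + (Mα − 1) x₁ x)`, and its divergence is
`x₁ s^(c−1) (2c + (Mα − 1) α) = x₁ s^(c−1) (Mα² − 1) = 0`.
-/

/-- Partial derivative of a function on `ℝ × ℝ` in the `i`-th coordinate direction. -/
noncomputable def pd2 (i : Fin 2) (f : ℝ × ℝ → ℝ) (x : ℝ × ℝ) : ℝ :=
  fderiv ℝ f x (if i = 0 then ((1 : ℝ), (0 : ℝ)) else ((0 : ℝ), (1 : ℝ)))

/-- Coefficients of the Meyers–Piccinini–Spagnolo example. -/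
noncomputable def meyersA (M : ℝ) (i j : Fin 2) (x : ℝ × ℝ) : ℝ :=
  if i = 0 ∧ j = 0 then (M * x.1 ^ 2 + x.2 ^ 2) / (x.1 ^ 2 + x.2 ^ 2)
  else if i = 1 ∧ j = 1 then (x.1 ^ 2 + M * x.2 ^ 2) / (x.1 ^ 2 + x.2 ^ 2)
  else (M - 1) * x.1 * x.2 / (x.1 ^ 2 + x.2 ^ 2)

/-- `u(x) = |x|^{1/√M} x₁/|x|`, written as `(x₁² + x₂²)^{(1/√M − 1)/2} · x₁`. -/
noncomputable def meyersU (M : ℝ) (x : ℝ × ℝ) : ℝ :=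
  (x.1 ^ 2 + x.2 ^ 2) ^ ((1 / Real.sqrt M - 1) / 2) * x.1

open ContinuousLinearMap

lemma hasFDerivAt_sqNorm (x : ℝ × ℝ) :
    HasFDerivAt (fun y : ℝ × ℝ => y.1 ^ 2 + y.2 ^ 2)
      ((2 * x.1) • fst ℝ ℝ ℝ + (2 * x.2) • snd ℝ ℝ ℝ) x := by
  have h1 := (hasDerivAt_pow 2 x.1).comp_hasFDerivAt x (hasFDerivAt_fst (𝕜 := ℝ))
  have h2 := (hasDerivAt_pow 2 x.2).comp_hasFDerivAt x (hasFDerivAt_snd (𝕜 := ℝ))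
  exact (h1.add h2).congr_fderiv (by simp)

lemma sqNorm_ne_zero {x : ℝ × ℝ} (hx : x ≠ 0) : x.1 ^ 2 + x.2 ^ 2 ≠ 0 := by
  contrapose! hx
  obtain ⟨h1, h2⟩ := (add_eq_zero_iff_of_nonneg (sq_nonneg _) (sq_nonneg _)).1 hx
  exact Prod.ext (pow_eq_zero_iff two_ne_zero |>.1 h1) (pow_eq_zero_iff two_ne_zero |>.1 h2)

lemma pd2_congr_of_eventually {f g : ℝ × ℝ → ℝ} {x : ℝ × ℝ} (h : ∀ᶠ y in nhds x, f y = g y)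
    (i : Fin 2) : pd2 i f x = pd2 i g x := by
  rw [pd2, pd2, Filter.EventuallyEq.fderiv_eq h]

section Punctured

variable {x : ℝ × ℝ} (hx : x.1 ^ 2 + x.2 ^ 2 ≠ 0)
include hx

lemma pd2_sqNorm_rpow_mul {P : ℝ × ℝ → ℝ} {P' : ℝ × ℝ →L[ℝ] ℝ} (hP : HasFDerivAt P P' x)
    (p : ℝ) :
    pd2 0 (fun y => (y.1 ^ 2 + y.2 ^ 2) ^ p * P y) x
        = (x.1 ^ 2 + x.2 ^ 2) ^ p * P' (1, 0) + 2 * p * x.1 * (x.1 ^ 2 + x.2 ^ 2) ^ (p - 1) * P x ∧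
      pd2 1 (fun y => (y.1 ^ 2 + y.2 ^ 2) ^ p * P y) x
        = (x.1 ^ 2 + x.2 ^ 2) ^ p * P' (0, 1) + 2 * p * x.2 * (x.1 ^ 2 + x.2 ^ 2) ^ (p - 1) * P x := by
  have h : fderiv ℝ (fun y => (y.1 ^ 2 + y.2 ^ 2) ^ p * P y) x = _ :=
    (((hasFDerivAt_sqNorm x).rpow_const (p := p) (Or.inl hx)).mul hP).fderiv
  constructor <;>
    simp only [pd2, h, Fin.isValue, one_ne_zero, ↓reduceIte, add_apply, smul_apply, smul_eq_mul,
      coe_fst', coe_snd', mul_one, mul_zero, add_zero, zero_add] <;> ring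

lemma pd2_sqNorm_rpow_mul_fst (c : ℝ) :
    pd2 0 (fun y => (y.1 ^ 2 + y.2 ^ 2) ^ c * y.1) x
        = (x.1 ^ 2 + x.2 ^ 2) ^ (c - 1) * (x.1 ^ 2 + x.2 ^ 2 + 2 * c * x.1 ^ 2) ∧
      pd2 1 (fun y => (y.1 ^ 2 + y.2 ^ 2) ^ c * y.1) x
        = (x.1 ^ 2 + x.2 ^ 2) ^ (c - 1) * (2 * c * x.1 * x.2) := by
  obtain ⟨h0, h1⟩ := pd2_sqNorm_rpow_mul hx (hasFDerivAt_fst (p := x)) c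
  rw [h0, h1, Real.rpow_sub_one hx]
  constructor <;> simp only [coe_fst', mul_one, mul_zero, zero_add] <;> field_simp

lemma meyersA_flux (M c : ℝ) :
    ∑ j : Fin 2, meyersA M 0 j x * pd2 j (fun y => (y.1 ^ 2 + y.2 ^ 2) ^ c * y.1) x
        = (x.1 ^ 2 + x.2 ^ 2) ^ (c - 1) * (x.1 ^ 2 + x.2 ^ 2 + (M * (2 * c + 1) - 1) * x.1 ^ 2) ∧
      ∑ j : Fin 2, meyersA M 1 j x * pd2 j (fun y => (y.1 ^ 2 + y.2 ^ 2) ^ c * y.1) x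
        = (x.1 ^ 2 + x.2 ^ 2) ^ (c - 1) * ((M * (2 * c + 1) - 1) * (x.1 * x.2)) := by
  obtain ⟨h0, h1⟩ := pd2_sqNorm_rpow_mul_fst hx c
  simp only [Fin.sum_univ_two, h0, h1, meyersA]
  constructor <;> norm_num <;> field_simp <;> ring

lemma divergence_flux (c β : ℝ) :
    pd2 0 (fun y => (y.1 ^ 2 + y.2 ^ 2) ^ (c - 1) * (y.1 ^ 2 + y.2 ^ 2 + β * y.1 ^ 2)) x
      + pd2 1 (fun y => (y.1 ^ 2 + y.2 ^ 2) ^ (c - 1) * (β * (y.1 * y.2))) x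
      = x.1 * (x.1 ^ 2 + x.2 ^ 2) ^ (c - 1) * (2 * c + β * (2 * c + 1)) := by
  have hsq := (hasDerivAt_pow 2 x.1).comp_hasFDerivAt x (hasFDerivAt_fst (𝕜 := ℝ))
  have hprod := (hasFDerivAt_fst (𝕜 := ℝ) (p := x)).mul (hasFDerivAt_snd (𝕜 := ℝ) (p := x))
  have h0 := (pd2_sqNorm_rpow_mul hx (P := fun y => y.1 ^ 2 + y.2 ^ 2 + β * y.1 ^ 2)
    ((hasFDerivAt_sqNorm x).add (hsq.const_mul β)) (c - 1)).1
  have h1 := (pd2_sqNorm_rpow_mul hx (P := fun y => β * (y.1 * y.2)) (hprod.const_mul β) (c - 1)).2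
  rw [h0, h1, Real.rpow_sub_one hx (c - 1)]
  simp only [Nat.cast_ofNat, Nat.add_one_sub_one, pow_one, add_apply, smul_apply, coe_fst', coe_snd',
    smul_eq_mul, mul_one, mul_zero, add_zero]
  field_simp
  ring

end Punctured

theorem meyers_example_solves (M : ℝ) (hM : 1 < M) :
    ∀ x : ℝ × ℝ, x ≠ 0 → x.1 ^ 2 + x.2 ^ 2 < 1 →
      (∑ i : Fin 2,
        pd2 i (fun y => ∑ j : Fin 2, meyersA M i j y * pd2 j (meyersU M) y) x) = 0 := by
  intro x hx _
  set c := (1 / √M - 1) / 2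
  have hpunct : ∀ᶠ y in nhds x, y.1 ^ 2 + y.2 ^ 2 ≠ 0 :=
    (isOpen_ne_fun (by fun_prop) continuous_const).mem_nhds (sqNorm_ne_zero hx)
  have h0 := pd2_congr_of_eventually (hpunct.mono fun y hy => (meyersA_flux hy M c).1) 0
  have h1 := pd2_congr_of_eventually (hpunct.mono fun y hy => (meyersA_flux hy M c).2) 1
  unfold meyersU
  rw [Fin.sum_univ_two, h0, h1, divergence_flux (sqNorm_ne_zero hx)]
  have hα : M * (2 * c + 1) ^ 2 = 1 := by
    rw [show 2 * c + 1 = 1 / √M by ring, div_pow, Real.sq_sqrt (by linarith)]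
    field_simp
  linear_combination x.1 * (x.1 ^ 2 + x.2 ^ 2) ^ (c - 1) * hα
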